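/- arXiv:2503.02726 — 4 statements merged into one kernel-verified Lean document; each statement's English description precedes it below -/
import Mathlib

section
/- Let μ_Y ∈ ℝ and σ_Y², σ_U², η > 0. Let P be the product measure (gaussianReal μ_Y σ_Y²) ⊗ (gaussianReal 0 σ_U²) ⊗ (gaussianReal 0 1) on ℝ³, let μ_{YZ} be the pushforward of P under the map (y, u, w) ↦ (y, √η·(y+u) + w), and let μ_Y and μ_Z denote the first and second marginals of μ_{YZ}. Then the Kullback–Leibler divergence of μ_{YZ} from the product measure μ_Y ⊗ μ_Z equals (1/2)·ln( (η·(σ_Y² + σ_U²) + 1) / (1 + σ_U²·η) ). -/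
open MeasureTheory ProbabilityTheory

/-- Kullback–Leibler divergence (in nats) of `μ` from `ν`:
the integral of the log of the Radon–Nikodym derivative of `μ` with respect to `ν`,
taken against `μ`. -/
noncomputable def klDiv {α : Type*} [MeasurableSpace α] (μ ν : Measure α) : ℝ :=
  ∫ x, Real.log (μ.rnDeriv ν x).toReal ∂μ

open Real Set
open scoped ENNReal NNReal

set_option linter.dupNamespace false
set_option maxHeartbeats 1000000

namespace GaussAux

/-- Shear transform as a measurable equivalence. -/
noncomputable def shear (a : ℝ) : (ℝ × ℝ) ≃ᵐ (ℝ × ℝ) where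
  toFun p := (p.1, a * p.1 + p.2)
  invFun p := (p.1, p.2 - a * p.1)
  left_inv p := by simp
  right_inv p := by simp
  measurable_toFun := measurable_fst.prodMk ((measurable_fst.const_mul a).add measurable_snd)
  measurable_invFun := measurable_fst.prodMk (measurable_snd.sub (measurable_fst.const_mul a))

lemma shear_symm_apply (a : ℝ) (p : ℝ × ℝ) : (shear a).symm p = (p.1, p.2 - a * p.1) := rfl

lemma shear_apply (a : ℝ) (p : ℝ × ℝ) : shear a p = (p.1, a * p.1 + p.2) := rfl

lemma shear_measurePreserving (a : ℝ) :
    MeasurePreserving (shear a) ((volume : Measure ℝ).prod volume)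
      ((volume : Measure ℝ).prod volume) :=
  (MeasurePreserving.id volume).skew_product (g := fun x y => a * x + y)
    ((measurable_fst.const_mul a).add measurable_snd)
    (Filter.Eventually.of_forall fun x => map_add_left_eq_self volume (a * x))

lemma map_withDensity_equiv {α β : Type*} [MeasurableSpace α] [MeasurableSpace β]
    (μ : Measure α) (e : α ≃ᵐ β) {f : α → ℝ≥0∞} (hf : Measurable f) :
    (μ.withDensity f).map e = (μ.map e).withDensity (f ∘ e.symm) := by
  ext s hs
  rw [Measure.map_apply e.measurable hs, withDensity_apply _ (e.measurable hs),
    withDensity_apply _ hs, setLIntegral_map hs (hf.comp e.symm.measurable) e.measurable]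
  refine setLIntegral_congr_fun (e.measurable hs) (fun x _ => ?_)
  simp

lemma map_snd_withDensity {k : ℝ × ℝ → ℝ≥0∞} (hk : Measurable k) :
    (((volume : Measure ℝ).prod volume).withDensity k).map Prod.snd
      = (volume : Measure ℝ).withDensity (fun x => ∫⁻ u, k (u, x)) := by
  ext s hs
  rw [Measure.map_apply measurable_snd hs, withDensity_apply _ (measurable_snd hs),
    withDensity_apply _ hs]
  have : Prod.snd ⁻¹' s = (Set.univ : Set ℝ) ×ˢ s := by ext p; simp
  rw [this, ← Measure.prod_restrict, Measure.restrict_univ,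
    lintegral_prod_symm' _ hk]



lemma gaussianReal_prod_withDensity (m1 m2 : ℝ) {v1 v2 : ℝ≥0} (h1 : v1 ≠ 0) (h2 : v2 ≠ 0) :
    (gaussianReal m1 v1).prod (gaussianReal m2 v2)
      = ((volume : Measure ℝ).prod volume).withDensity
          (fun p => gaussianPDF m1 v1 p.1 * gaussianPDF m2 v2 p.2) := by
  refine Measure.prod_eq fun s t hs ht => ?_
  rw [withDensity_apply _ (hs.prod ht), ← Measure.prod_restrict,
    lintegral_prod_mul ((measurable_gaussianPDF m1 v1).aemeasurable)
      ((measurable_gaussianPDF m2 v2).aemeasurable),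
    gaussianReal_of_var_ne_zero m1 h1, gaussianReal_of_var_ne_zero m2 h2,
    withDensity_apply _ hs, withDensity_apply _ ht]

/-- Pointwise convolution identity for Gaussian densities. -/
lemma gaussianPDFReal_conv {V1 V2 : ℝ} (h1 : 0 < V1) (h2 : 0 < V2) (m x u : ℝ) :
    gaussianPDFReal m V1.toNNReal u * gaussianPDFReal 0 V2.toNNReal (x - u)
      = gaussianPDFReal m (V1 + V2).toNNReal x
        * gaussianPDFReal ((V2 * m + V1 * x) / (V1 + V2)) (V1 * V2 / (V1 + V2)).toNNReal u := by
  have h12 : 0 < V1 + V2 := by linarith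
  have h3 : 0 < V1 * V2 / (V1 + V2) := by positivity
  simp only [gaussianPDFReal]
  rw [Real.coe_toNNReal _ h1.le, Real.coe_toNNReal _ h2.le, Real.coe_toNNReal _ h12.le,
    Real.coe_toNNReal _ h3.le]
  rw [mul_mul_mul_comm, mul_mul_mul_comm (√(2 * π * (V1 + V2)))⁻¹, ← Real.exp_add, ← Real.exp_add]
  have hπ := Real.pi_pos
  congr 1
  · rw [← mul_inv, ← mul_inv, ← Real.sqrt_mul (by positivity), ← Real.sqrt_mul (by positivity)]
    congr 2
    field_simp
  · congr 1
    field_simp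
    ring

lemma lintegral_gaussianPDF_conv {V1 V2 : ℝ} (h1 : 0 < V1) (h2 : 0 < V2) (m x : ℝ) :
    ∫⁻ u, gaussianPDF m V1.toNNReal u * gaussianPDF 0 V2.toNNReal (x - u)
      = gaussianPDF m (V1 + V2).toNNReal x := by
  have h3 : ((V1 * V2 / (V1 + V2)).toNNReal : ℝ≥0) ≠ 0 := by
    simp only [ne_eq, Real.toNNReal_eq_zero, not_le]
    positivity
  calc ∫⁻ u, gaussianPDF m V1.toNNReal u * gaussianPDF 0 V2.toNNReal (x - u)
      = ∫⁻ u, gaussianPDF m (V1 + V2).toNNReal x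
          * gaussianPDF ((V2 * m + V1 * x) / (V1 + V2)) (V1 * V2 / (V1 + V2)).toNNReal u := by
        congr 1
        ext u
        simp only [gaussianPDF]
        rw [← ENNReal.ofReal_mul (gaussianPDFReal_nonneg _ _ _),
          ← ENNReal.ofReal_mul (gaussianPDFReal_nonneg _ _ _),
          gaussianPDFReal_conv h1 h2]
    _ = gaussianPDF m (V1 + V2).toNNReal x := by
        rw [lintegral_const_mul _ (measurable_gaussianPDF _ _),
          lintegral_gaussianPDF_eq_one _ h3, mul_one]

/-- Sum of independent Gaussians. -/
lemma gaussianReal_map_add {V1 V2 : ℝ} (h1 : 0 < V1) (h2 : 0 < V2) (m : ℝ) :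
    ((gaussianReal m V1.toNNReal).prod (gaussianReal 0 V2.toNNReal)).map
        (fun p : ℝ × ℝ => p.1 + p.2)
      = gaussianReal m (V1 + V2).toNNReal := by
  have h1' : V1.toNNReal ≠ 0 := by simp [Real.toNNReal_eq_zero, not_le, h1]
  have h2' : V2.toNNReal ≠ 0 := by simp [Real.toNNReal_eq_zero, not_le, h2]
  have h12' : (V1 + V2).toNNReal ≠ 0 := by
    simp only [ne_eq, Real.toNNReal_eq_zero, not_le]; linarith
  have hF : Measurable (fun p : ℝ × ℝ => gaussianPDF m V1.toNNReal p.1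
      * gaussianPDF 0 V2.toNNReal p.2) :=
    ((measurable_gaussianPDF _ _).comp measurable_fst).mul
      ((measurable_gaussianPDF _ _).comp measurable_snd)
  have key : (fun p : ℝ × ℝ => p.1 + p.2) = Prod.snd ∘ (shear 1) := by
    ext p; simp [shear_apply]
  rw [gaussianReal_prod_withDensity m 0 h1' h2', key, ← Measure.map_map measurable_snd
    (shear 1).measurable, map_withDensity_equiv _ (shear 1) hF,
    (shear_measurePreserving 1).map_eq]
  have hcomp : ((fun p : ℝ × ℝ => gaussianPDF m V1.toNNReal p.1
      * gaussianPDF 0 V2.toNNReal p.2) ∘ (shear 1).symm)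
      = fun p : ℝ × ℝ => gaussianPDF m V1.toNNReal p.1
          * gaussianPDF 0 V2.toNNReal (p.2 - p.1) := by
    ext p; simp [shear_symm_apply]
  have hk : Measurable (fun p : ℝ × ℝ => gaussianPDF m V1.toNNReal p.1
      * gaussianPDF 0 V2.toNNReal (p.2 - p.1)) :=
    ((measurable_gaussianPDF _ _).comp measurable_fst).mul
      ((measurable_gaussianPDF _ _).comp (measurable_snd.sub measurable_fst))
  rw [hcomp, map_snd_withDensity hk]
  have : (fun x : ℝ => ∫⁻ u, gaussianPDF m V1.toNNReal u * gaussianPDF 0 V2.toNNReal (x - u))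
      = gaussianPDF m (V1 + V2).toNNReal := by
    ext x; exact lintegral_gaussianPDF_conv h1 h2 m x
  rw [this, ← gaussianReal_of_var_ne_zero m h12']



lemma integrable_sq_mul_exp {b : ℝ} (hb : 0 < b) :
    Integrable (fun x : ℝ => x ^ 2 * Real.exp (-b * x ^ 2)) := by
  have h2 : ∀ x : ℝ, x ^ (2:ℝ) = x ^ (2:ℕ) := fun x => by
    rw [show ((2:ℝ)) = ((2:ℕ):ℝ) by norm_num, Real.rpow_natCast]
  have := integrable_rpow_mul_exp_neg_mul_sq hb (show (-1:ℝ) < 2 by norm_num)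
  simp only [h2] at this
  exact this

lemma integral_sq_mul_exp {b : ℝ} (hb : 0 < b) :
    ∫ x : ℝ, x ^ 2 * Real.exp (-b * x ^ 2) = √π / (2 * b * √b) := by
  have hIoi : ∫ x in Ioi (0:ℝ), x ^ 2 * Real.exp (-b * x ^ 2)
      = b ^ (-(3:ℝ)/2) * (1/2) * Real.Gamma (3/2) := by
    have := integral_rpow_mul_exp_neg_mul_rpow (p := 2) (q := 2)
      (show (0:ℝ) < 2 by norm_num) (show (-1:ℝ) < 2 by norm_num) hb
    have h2 : ∀ x : ℝ, x ^ (2:ℝ) = x ^ (2:ℕ) := fun x => by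
      rw [show ((2:ℝ)) = ((2:ℕ):ℝ) by norm_num, Real.rpow_natCast]
    simp only [h2] at this
    rw [this]
    norm_num
  have hGamma : Real.Gamma (3/2) = √π / 2 := by
    have h12 : (3:ℝ)/2 = 1/2 + 1 := by norm_num
    rw [h12, Real.Gamma_add_one (by norm_num), Real.Gamma_one_half_eq]
    ring
  have heven : ∫ x : ℝ, x ^ 2 * Real.exp (-b * x ^ 2)
      = 2 * ∫ x in Ioi (0:ℝ), x ^ 2 * Real.exp (-b * x ^ 2) := by
    rw [← setIntegral_univ, ← Iic_union_Ioi (a := (0:ℝ)),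
      setIntegral_union (Iic_disjoint_Ioi le_rfl) measurableSet_Ioi
        ((integrable_sq_mul_exp hb).integrableOn) ((integrable_sq_mul_exp hb).integrableOn)]
    have : ∫ x in Iic (0:ℝ), x ^ 2 * Real.exp (-b * x ^ 2)
        = ∫ x in Ioi (0:ℝ), x ^ 2 * Real.exp (-b * x ^ 2) := by
      calc ∫ x in Iic (0:ℝ), x ^ 2 * Real.exp (-b * x ^ 2)
          = ∫ x in Iic (0:ℝ), ((-x) ^ 2 * Real.exp (-b * (-x) ^ 2)) := by simp
        _ = ∫ x in Ioi (-(0:ℝ)), (x ^ 2 * Real.exp (-b * x ^ 2)) :=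
            integral_comp_neg_Iic (0:ℝ) (fun x => x ^ 2 * Real.exp (-b * x ^ 2))
        _ = ∫ x in Ioi (0:ℝ), x ^ 2 * Real.exp (-b * x ^ 2) := by rw [neg_zero]
    rw [this]; ring
  rw [heven, hIoi, hGamma]
  have hb' : √b ≠ 0 := by positivity
  have h32 : b ^ (-(3:ℝ)/2) = (b * √b)⁻¹ := by
    rw [show (-(3:ℝ)/2) = -(1 + 1/2) by norm_num, Real.rpow_neg hb.le,
      Real.rpow_add hb, Real.rpow_one, ← Real.sqrt_eq_rpow]
  rw [h32]
  field_simp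

lemma integrable_sq_gaussianPDFReal {V : ℝ} (hV : 0 < V) :
    Integrable (fun x : ℝ => gaussianPDFReal 0 V.toNNReal x * x ^ 2) := by
  have hb : 0 < (2 * V)⁻¹ := by positivity
  have heq : (fun x : ℝ => gaussianPDFReal 0 V.toNNReal x * x ^ 2)
      = fun x : ℝ => (√(2 * π * V))⁻¹ * (x ^ 2 * Real.exp (-(2*V)⁻¹ * x ^ 2)) := by
    ext x
    simp only [gaussianPDFReal, Real.coe_toNNReal _ hV.le, sub_zero]
    rw [show -x ^ 2 / (2 * V) = -(2*V)⁻¹ * x ^ 2 by field_simp]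
    ring
  rw [heq]
  exact (integrable_sq_mul_exp hb).const_mul _

lemma integral_sq_gaussianPDFReal {V : ℝ} (hV : 0 < V) :
    ∫ x : ℝ, gaussianPDFReal 0 V.toNNReal x * x ^ 2 = V := by
  have hb : 0 < (2 * V)⁻¹ := by positivity
  have hπ := Real.pi_pos
  have heq : (fun x : ℝ => gaussianPDFReal 0 V.toNNReal x * x ^ 2)
      = fun x : ℝ => (√(2 * π * V))⁻¹ * (x ^ 2 * Real.exp (-(2*V)⁻¹ * x ^ 2)) := by
    ext x
    simp only [gaussianPDFReal, Real.coe_toNNReal _ hV.le, sub_zero]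
    rw [show -x ^ 2 / (2 * V) = -(2*V)⁻¹ * x ^ 2 by field_simp]
    ring
  rw [heq, integral_const_mul, integral_sq_mul_exp hb]
  have h1 : √((2 * V)⁻¹) = (√(2 * V))⁻¹ := by rw [Real.sqrt_inv]
  have h2 : √(2 * π * V) = √π * √(2 * V) := by
    rw [← Real.sqrt_mul (by positivity)]
    congr 1; ring
  rw [h1, h2]
  have h2V : (0:ℝ) < √(2 * V) := by positivity
  have hπ' : (0:ℝ) < √π := by positivity
  have hsq : √(2 * V) * √(2 * V) = 2 * V := Real.mul_self_sqrt (by positivity)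
  field_simp


/-- Law of `a X + N` where `X ~ N(m, W1)`, `N ~ N(0, W2)` independent. -/
lemma gauss_prod_map_lin {W1 W2 : ℝ} (h1 : 0 < W1) (h2 : 0 < W2) (a m : ℝ) (ha : a ≠ 0) :
    ((gaussianReal m W1.toNNReal).prod (gaussianReal 0 W2.toNNReal)).map
        (fun p : ℝ × ℝ => a * p.1 + p.2)
      = gaussianReal (a * m) (a ^ 2 * W1 + W2).toNNReal := by
  have hW1' : 0 < a ^ 2 * W1 := by positivity
  have hkey : (fun p : ℝ × ℝ => a * p.1 + p.2)
      = (fun p : ℝ × ℝ => p.1 + p.2) ∘ Prod.map (a * ·) (id : ℝ → ℝ) := rfl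
  have hma : Measurable fun x : ℝ => a * x := measurable_const_mul a
  rw [hkey, ← Measure.map_map (show Measurable (fun p : ℝ × ℝ => p.1 + p.2) from measurable_fst.add measurable_snd)
    (hma.prodMap measurable_id),
    ← Measure.map_prod_map _ _ hma measurable_id,
    Measure.map_id, gaussianReal_map_const_mul a]
  have hv : (NNReal.mk (a ^ 2) (sq_nonneg a) * W1.toNNReal : ℝ≥0) = (a ^ 2 * W1).toNNReal := by
    ext
    rw [NNReal.coe_mul, Real.coe_toNNReal _ h1.le, Real.coe_toNNReal _ hW1'.le]
    rfl
  rw [hv, gaussianReal_map_add hW1' h2 (a * m)]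

end GaussAux

namespace GaussAux2

lemma gaussianReal_eq_withDensity_nnreal (m : ℝ) (v : ℝ≥0) (hv : v ≠ 0) :
    gaussianReal m v = (volume : Measure ℝ).withDensity
      (fun x => ((gaussianPDFReal m v x).toNNReal : ℝ≥0∞)) := by
  rw [gaussianReal_of_var_ne_zero m hv]
  rfl

lemma integrable_sq_gaussianReal {V : ℝ} (hV : 0 < V)
    (hint : Integrable (fun x : ℝ => gaussianPDFReal 0 V.toNNReal x * x ^ 2)) :
    Integrable (fun x : ℝ => x ^ 2) (gaussianReal 0 V.toNNReal) := by
  have hv : (V.toNNReal : ℝ≥0) ≠ 0 := by simp [Real.toNNReal_eq_zero, not_le, hV]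
  rw [gaussianReal_eq_withDensity_nnreal 0 V.toNNReal hv]
  rw [integrable_withDensity_iff_integrable_smul
    ((measurable_gaussianPDFReal 0 V.toNNReal).real_toNNReal)]
  refine hint.congr (Filter.Eventually.of_forall fun x => ?_)
  simp [NNReal.smul_def, Real.coe_toNNReal _ (gaussianPDFReal_nonneg 0 V.toNNReal x)]

lemma integral_sq_gaussianReal' {V : ℝ} (hV : 0 < V)
    (hval : ∫ x : ℝ, gaussianPDFReal 0 V.toNNReal x * x ^ 2 = V) :
    ∫ x, x ^ 2 ∂(gaussianReal 0 V.toNNReal) = V := by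
  have hv : (V.toNNReal : ℝ≥0) ≠ 0 := by simp [Real.toNNReal_eq_zero, not_le, hV]
  calc ∫ x, x ^ 2 ∂(gaussianReal 0 V.toNNReal)
      = ∫ x : ℝ, gaussianPDFReal 0 V.toNNReal x * x ^ 2 := by
        rw [gaussianReal_eq_withDensity_nnreal 0 V.toNNReal hv,
          integral_withDensity_eq_integral_smul₀
            ((measurable_gaussianPDFReal 0 V.toNNReal).real_toNNReal.aemeasurable)]
        congr 1
        ext x
        simp [NNReal.smul_def, Real.coe_toNNReal _ (gaussianPDFReal_nonneg 0 V.toNNReal x)]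
    _ = V := hval

end GaussAux2


/-- Scalar case of Theorem 3.1: for `Y ~ N(μ_Y, σ_Y²)`, `U ~ N(0, σ_U²)`, `W ~ N(0,1)`
independent and `Z = √η (Y + U) + W`, the mutual information
`I(Y; Z) = KL(μ_{YZ} ‖ μ_Y ⊗ μ_Z)` equals
`(1/2) ln ((η (σ_Y² + σ_U²) + 1) / (1 + σ_U² η))`. -/
theorem mutualInfo_gaussian_noise_channel
    (μY σY2 σU2 η : ℝ) (hσY : 0 < σY2) (hσU : 0 < σU2) (hη : 0 < η)
    (P : Measure (ℝ × ℝ × ℝ))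
    (hP : P = (gaussianReal μY σY2.toNNReal).prod
      ((gaussianReal 0 σU2.toNNReal).prod (gaussianReal 0 1)))
    (μYZ : Measure (ℝ × ℝ))
    (hμYZ : μYZ = P.map (fun p => (p.1, Real.sqrt η * (p.1 + p.2.1) + p.2.2))) :
    klDiv μYZ ((μYZ.map Prod.fst).prod (μYZ.map Prod.snd))
      = (1 / 2) * Real.log ((η * (σY2 + σU2) + 1) / (1 + σU2 * η)) := by
  subst hP
  subst hμYZ
  -- notation
  set a : ℝ := Real.sqrt η with ha_def
  have ha : 0 < a := Real.sqrt_pos.mpr hη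
  have ha2 : a ^ 2 = η := Real.sq_sqrt hη.le
  have hS : 0 < η * σU2 + 1 := by positivity
  have hT : 0 < η * σY2 + (η * σU2 + 1) := by positivity
  have hσY' : (σY2.toNNReal : ℝ≥0) ≠ 0 := by
    simp only [ne_eq, Real.toNNReal_eq_zero, not_le]; exact hσY
  have hS' : ((η * σU2 + 1).toNNReal : ℝ≥0) ≠ 0 := by
    simp only [ne_eq, Real.toNNReal_eq_zero, not_le]; exact hS
  have hT' : ((η * σY2 + (η * σU2 + 1)).toNNReal : ℝ≥0) ≠ 0 := by
    simp only [ne_eq, Real.toNNReal_eq_zero, not_le]; exact hT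
  -- Step 1: μYZ as the image of a product measure under the shear map
  have hQ : ((gaussianReal 0 σU2.toNNReal).prod (gaussianReal 0 1)).map
      (fun q : ℝ × ℝ => a * q.1 + q.2) = gaussianReal 0 (η * σU2 + 1).toNNReal := by
    rw [show (1 : ℝ≥0) = (1 : ℝ).toNNReal by simp,
      GaussAux.gauss_prod_map_lin hσU one_pos a 0 ha.ne', mul_zero, ha2]
  have hT1m : Measurable fun p : ℝ × ℝ × ℝ => (p.1, a * p.2.1 + p.2.2) :=
    measurable_fst.prodMk (((measurable_fst.comp measurable_snd).const_mul a).add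
      (measurable_snd.comp measurable_snd))
  have hν : ((gaussianReal μY σY2.toNNReal).prod
        ((gaussianReal 0 σU2.toNNReal).prod (gaussianReal 0 1))).map
          (fun p : ℝ × ℝ × ℝ => (p.1, a * (p.1 + p.2.1) + p.2.2))
      = ((gaussianReal μY σY2.toNNReal).prod
          (gaussianReal 0 (η * σU2 + 1).toNNReal)).map (GaussAux.shear a) := by
    have hdecomp : (fun p : ℝ × ℝ × ℝ => (p.1, a * (p.1 + p.2.1) + p.2.2))
        = (GaussAux.shear a) ∘ (fun p : ℝ × ℝ × ℝ => (p.1, a * p.2.1 + p.2.2)) := by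
      funext p
      simp only [Function.comp_apply, GaussAux.shear_apply]
      congr 1
      ring
    have hsplit : (fun p : ℝ × ℝ × ℝ => (p.1, a * p.2.1 + p.2.2))
        = Prod.map (id : ℝ → ℝ) (fun q : ℝ × ℝ => a * q.1 + q.2) := rfl
    rw [hdecomp, ← Measure.map_map (GaussAux.shear a).measurable hT1m, hsplit,
      ← Measure.map_prod_map _ _ measurable_id
        (show Measurable (fun q : ℝ × ℝ => a * q.1 + q.2) from (measurable_fst.const_mul a).add measurable_snd),
      Measure.map_id, hQ]
  rw [hν]
  set ν := (gaussianReal μY σY2.toNNReal).prod (gaussianReal 0 (η * σU2 + 1).toNNReal) with hν_def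
  set μ2 := ν.map (GaussAux.shear a) with hμ2_def
  haveI : IsProbabilityMeasure μ2 := by
    rw [hμ2_def]
    exact Measure.isProbabilityMeasure_map (GaussAux.shear a).measurable.aemeasurable
  -- marginals
  have hfst : μ2.map Prod.fst = gaussianReal μY σY2.toNNReal := by
    rw [hμ2_def, Measure.map_map measurable_fst (GaussAux.shear a).measurable]
    have : Prod.fst ∘ (GaussAux.shear a) = (Prod.fst : ℝ × ℝ → ℝ) := rfl
    rw [this, hν_def]
    exact Measure.fst_prod
  have hsnd : μ2.map Prod.snd = gaussianReal (a * μY) (η * σY2 + (η * σU2 + 1)).toNNReal := by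
    rw [hμ2_def, Measure.map_map measurable_snd (GaussAux.shear a).measurable]
    have : Prod.snd ∘ (GaussAux.shear a) = fun p : ℝ × ℝ => a * p.1 + p.2 := rfl
    rw [this, hν_def, GaussAux.gauss_prod_map_lin hσY hS a μY ha.ne', ha2]
  have hlaw1 : μ2.map (fun p : ℝ × ℝ => p.2 - a * p.1)
      = gaussianReal 0 (η * σU2 + 1).toNNReal := by
    rw [hμ2_def, Measure.map_map (show Measurable (fun p : ℝ × ℝ => p.2 - a * p.1) from measurable_snd.sub (measurable_fst.const_mul a))
      (GaussAux.shear a).measurable]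
    have : (fun p : ℝ × ℝ => p.2 - a * p.1) ∘ (GaussAux.shear a) = (Prod.snd : ℝ × ℝ → ℝ) := by
      funext p
      simp [GaussAux.shear_apply]
    rw [this, hν_def]
    exact Measure.snd_prod
  have hlaw2 : μ2.map (fun p : ℝ × ℝ => p.2 - a * μY)
      = gaussianReal 0 (η * σY2 + (η * σU2 + 1)).toNNReal := by
    have hcomp : (fun p : ℝ × ℝ => p.2 - a * μY)
        = (fun x : ℝ => x + (-(a * μY))) ∘ (Prod.snd : ℝ × ℝ → ℝ) := by
      funext p
      simp [sub_eq_add_neg]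
    rw [hcomp, ← Measure.map_map (measurable_add_const _) measurable_snd, hsnd,
      gaussianReal_map_add_const (-(a * μY)), add_neg_cancel]
  -- density representations
  set F : ℝ × ℝ → ℝ≥0∞ := fun p => gaussianPDF μY σY2.toNNReal p.1
    * gaussianPDF 0 (η * σU2 + 1).toNNReal (p.2 - a * p.1) with hF_def
  set G : ℝ × ℝ → ℝ≥0∞ := fun p => gaussianPDF μY σY2.toNNReal p.1
    * gaussianPDF (a * μY) (η * σY2 + (η * σU2 + 1)).toNNReal p.2 with hG_def
  have hFmeas : Measurable F :=
    ((measurable_gaussianPDF _ _).comp measurable_fst).mul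
      ((measurable_gaussianPDF _ _).comp (measurable_snd.sub (measurable_fst.const_mul a)))
  have hGmeas : Measurable G :=
    ((measurable_gaussianPDF _ _).comp measurable_fst).mul
      ((measurable_gaussianPDF _ _).comp measurable_snd)
  have hF0meas : Measurable (fun p : ℝ × ℝ => gaussianPDF μY σY2.toNNReal p.1
      * gaussianPDF 0 (η * σU2 + 1).toNNReal p.2) :=
    ((measurable_gaussianPDF _ _).comp measurable_fst).mul
      ((measurable_gaussianPDF _ _).comp measurable_snd)
  have hdensF : μ2 = ((volume : Measure ℝ).prod volume).withDensity F := by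
    rw [hμ2_def, hν_def, GaussAux.gaussianReal_prod_withDensity _ _ hσY' hS',
      GaussAux.map_withDensity_equiv _ (GaussAux.shear a) hF0meas,
      (GaussAux.shear_measurePreserving a).map_eq]
    rfl
  set pm := (μ2.map Prod.fst).prod (μ2.map Prod.snd) with hpm_def
  haveI : IsProbabilityMeasure pm := by
    rw [hpm_def, hfst, hsnd]
    infer_instance
  have hdensG : pm = ((volume : Measure ℝ).prod volume).withDensity G := by
    rw [hpm_def, hfst, hsnd, GaussAux.gaussianReal_prod_withDensity _ _ hσY' hT']
  have hG0 : ∀ p, G p ≠ 0 := fun p =>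
    mul_ne_zero (gaussianPDF_pos _ hσY' _).ne' (gaussianPDF_pos _ hT' _).ne'
  have hGtop : ∀ p, G p ≠ ∞ := fun p => ENNReal.mul_ne_top ENNReal.ofReal_ne_top
    ENNReal.ofReal_ne_top
  have h5 : μ2 = pm.withDensity (fun p => F p / G p) := by
    rw [hdensG, ← withDensity_mul _ hGmeas (show Measurable (fun p => F p / G p) from hFmeas.div hGmeas)]
    rw [hdensF]
    congr 1
    funext p
    simp only [Pi.mul_apply]
    exact (ENNReal.mul_div_cancel' (fun h => absurd h (hG0 p)) (fun h => absurd h (hGtop p))).symm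
  have h6 : μ2.rnDeriv pm =ᵐ[pm] fun p => F p / G p := by
    have := Measure.rnDeriv_withDensity pm (show Measurable (fun p => F p / G p) from hFmeas.div hGmeas)
    rwa [← h5] at this
  have hac : μ2 ≪ pm := h5 ▸ withDensity_absolutelyContinuous pm _
  -- pointwise formula for the log of the density ratio
  have hae : (fun p => Real.log (μ2.rnDeriv pm p).toReal) =ᵐ[μ2]
      fun p : ℝ × ℝ => (Real.log (Real.sqrt (2 * π * (η * σY2 + (η * σU2 + 1))))
          - Real.log (Real.sqrt (2 * π * (η * σU2 + 1))))
        + ((p.2 - a * μY) ^ 2 / (2 * (η * σY2 + (η * σU2 + 1)))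
          - (p.2 - a * p.1) ^ 2 / (2 * (η * σU2 + 1))) := by
    filter_upwards [hac.ae_eq h6] with p hp
    rw [hp]
    have hA : 0 < gaussianPDFReal μY σY2.toNNReal p.1 := gaussianPDFReal_pos _ _ _ hσY'
    have hB : 0 < gaussianPDFReal 0 (η * σU2 + 1).toNNReal (p.2 - a * p.1) :=
      gaussianPDFReal_pos _ _ _ hS'
    have hC : 0 < gaussianPDFReal (a * μY) (η * σY2 + (η * σU2 + 1)).toNNReal p.2 :=
      gaussianPDFReal_pos _ _ _ hT'
    have hFv : F p = ENNReal.ofReal (gaussianPDFReal μY σY2.toNNReal p.1)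
        * ENNReal.ofReal (gaussianPDFReal 0 (η * σU2 + 1).toNNReal (p.2 - a * p.1)) := rfl
    have hGv : G p = ENNReal.ofReal (gaussianPDFReal μY σY2.toNNReal p.1)
        * ENNReal.ofReal (gaussianPDFReal (a * μY)
            (η * σY2 + (η * σU2 + 1)).toNNReal p.2) := rfl
    rw [ENNReal.toReal_div, hFv, hGv, ENNReal.toReal_mul, ENNReal.toReal_mul,
      ENNReal.toReal_ofReal hA.le, ENNReal.toReal_ofReal hB.le, ENNReal.toReal_ofReal hC.le,
      mul_div_mul_left _ _ hA.ne', Real.log_div hB.ne' hC.ne']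
    simp only [gaussianPDFReal, Real.coe_toNNReal _ hS.le, Real.coe_toNNReal _ hT.le, sub_zero]
    have hsq1 : (0:ℝ) < Real.sqrt (2 * π * (η * σU2 + 1)) := by positivity
    have hsq2 : (0:ℝ) < Real.sqrt (2 * π * (η * σY2 + (η * σU2 + 1))) := by positivity
    rw [Real.log_mul (inv_ne_zero hsq1.ne') (Real.exp_ne_zero _),
      Real.log_mul (inv_ne_zero hsq2.ne') (Real.exp_ne_zero _),
      Real.log_inv, Real.log_inv, Real.log_exp, Real.log_exp]
    ring
  -- second moments
  have hsm : AEStronglyMeasurable (fun x : ℝ => x ^ 2)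
      (gaussianReal 0 (η * σU2 + 1).toNNReal) := (measurable_id.pow_const 2).aestronglyMeasurable
  have hsm' : AEStronglyMeasurable (fun x : ℝ => x ^ 2)
      (gaussianReal 0 (η * σY2 + (η * σU2 + 1)).toNNReal) :=
    (measurable_id.pow_const 2).aestronglyMeasurable
  have hmg1 : Measurable fun p : ℝ × ℝ => p.2 - a * p.1 :=
    measurable_snd.sub (measurable_fst.const_mul a)
  have hmg2 : Measurable fun p : ℝ × ℝ => p.2 - a * μY :=
    measurable_snd.sub_const _
  have hintS : Integrable (fun x : ℝ => x ^ 2) (gaussianReal 0 (η * σU2 + 1).toNNReal) :=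
    GaussAux2.integrable_sq_gaussianReal hS (GaussAux.integrable_sq_gaussianPDFReal hS)
  have hintT : Integrable (fun x : ℝ => x ^ 2)
      (gaussianReal 0 (η * σY2 + (η * σU2 + 1)).toNNReal) :=
    GaussAux2.integrable_sq_gaussianReal hT (GaussAux.integrable_sq_gaussianPDFReal hT)
  have J1 : Integrable (fun p : ℝ × ℝ => (p.2 - a * p.1) ^ 2) μ2 := by
    have := (integrable_map_measure
      ((measurable_id.pow_const 2).aestronglyMeasurable) hmg1.aemeasurable).mp
      (by rw [hlaw1]; exact hintS)
    simpa [Function.comp_def] using this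
  have J2 : Integrable (fun p : ℝ × ℝ => (p.2 - a * μY) ^ 2) μ2 := by
    have := (integrable_map_measure
      ((measurable_id.pow_const 2).aestronglyMeasurable) hmg2.aemeasurable).mp
      (by rw [hlaw2]; exact hintT)
    simpa [Function.comp_def] using this
  have I1 : ∫ p, (p.2 - a * p.1) ^ 2 ∂μ2 = η * σU2 + 1 := by
    have hmap := integral_map (μ := μ2) hmg1.aemeasurable
      ((measurable_id.pow_const 2).aestronglyMeasurable (μ := μ2.map _))
    rw [hlaw1] at hmap
    simp only [id_eq] at hmap
    rw [← hmap]
    exact GaussAux2.integral_sq_gaussianReal' hS (GaussAux.integral_sq_gaussianPDFReal hS)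
  have I2 : ∫ p, (p.2 - a * μY) ^ 2 ∂μ2 = η * σY2 + (η * σU2 + 1) := by
    have hmap := integral_map (μ := μ2) hmg2.aemeasurable
      ((measurable_id.pow_const 2).aestronglyMeasurable (μ := μ2.map _))
    rw [hlaw2] at hmap
    simp only [id_eq] at hmap
    rw [← hmap]
    exact GaussAux2.integral_sq_gaussianReal' hT (GaussAux.integral_sq_gaussianPDFReal hT)
  -- final computation
  have hklDiv : klDiv μ2 pm = ∫ p, ((Real.log (Real.sqrt (2 * π * (η * σY2 + (η * σU2 + 1))))
          - Real.log (Real.sqrt (2 * π * (η * σU2 + 1))))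
        + ((p.2 - a * μY) ^ 2 / (2 * (η * σY2 + (η * σU2 + 1)))
          - (p.2 - a * p.1) ^ 2 / (2 * (η * σU2 + 1)))) ∂μ2 :=
    integral_congr_ae hae
  have hInt : Integrable (fun p : ℝ × ℝ =>
      (p.2 - a * μY) ^ 2 / (2 * (η * σY2 + (η * σU2 + 1)))
        - (p.2 - a * p.1) ^ 2 / (2 * (η * σU2 + 1))) μ2 :=
    (J2.div_const _).sub (J1.div_const _)
  have e1 : ∫ p : ℝ × ℝ, ((Real.log (Real.sqrt (2 * π * (η * σY2 + (η * σU2 + 1))))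
          - Real.log (Real.sqrt (2 * π * (η * σU2 + 1))))
        + ((p.2 - a * μY) ^ 2 / (2 * (η * σY2 + (η * σU2 + 1)))
          - (p.2 - a * p.1) ^ 2 / (2 * (η * σU2 + 1)))) ∂μ2
      = (Real.log (Real.sqrt (2 * π * (η * σY2 + (η * σU2 + 1))))
          - Real.log (Real.sqrt (2 * π * (η * σU2 + 1))))
        + ∫ p : ℝ × ℝ, ((p.2 - a * μY) ^ 2 / (2 * (η * σY2 + (η * σU2 + 1)))
          - (p.2 - a * p.1) ^ 2 / (2 * (η * σU2 + 1))) ∂μ2 := by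
    rw [integral_add (integrable_const _) hInt, integral_const]
    simp [measure_univ]
  have e2 : ∫ p : ℝ × ℝ, ((p.2 - a * μY) ^ 2 / (2 * (η * σY2 + (η * σU2 + 1)))
          - (p.2 - a * p.1) ^ 2 / (2 * (η * σU2 + 1))) ∂μ2
      = (∫ p : ℝ × ℝ, (p.2 - a * μY) ^ 2 ∂μ2) / (2 * (η * σY2 + (η * σU2 + 1)))
        - (∫ p : ℝ × ℝ, (p.2 - a * p.1) ^ 2 ∂μ2) / (2 * (η * σU2 + 1)) := by
    rw [integral_sub (J2.div_const _) (J1.div_const _), integral_div, integral_div]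
  rw [hklDiv, e1, e2, I1, I2]
  have hhalf : (η * σY2 + (η * σU2 + 1)) / (2 * (η * σY2 + (η * σU2 + 1)))
      - (η * σU2 + 1) / (2 * (η * σU2 + 1)) = 0 := by
    rw [div_mul_eq_div_div_swap, div_self hT.ne', div_mul_eq_div_div_swap, div_self hS.ne']
    norm_num
  rw [hhalf, add_zero]
  rw [Real.log_sqrt (by positivity), Real.log_sqrt (by positivity),
    div_sub_div_same, ← Real.log_div (by positivity) (by positivity)]
  rw [show (2 * π * (η * σY2 + (η * σU2 + 1))) / (2 * π * (η * σU2 + 1))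
      = (η * (σY2 + σU2) + 1) / (1 + σU2 * η) by
    rw [mul_div_mul_left _ _ (by positivity : (2 : ℝ) * π ≠ 0)]
    congr 1 <;> ring]
  ring
end

section
/- Let μ_Y ∈ ℝ and σ_Y², σ_U², η > 0. Let μ₁ be the pushforward of (gaussianReal μ_Y σ_Y²) ⊗ (gaussianReal 0 σ_U²) ⊗ (gaussianReal 0 1) on ℝ³ under (y, u, w) ↦ (y, √η·(y+u) + w), and let μ₂ be the pushforward of (gaussianReal μ_Y σ_Y²) ⊗ (gaussianReal 0 (σ_U² + η⁻¹)) on ℝ² under (y, v) ↦ (y, y + v). Then the Kullback–Leibler divergence of μ₁ from the product of its two marginals equals the Kullback–Leibler divergence of μ₂ from the product of its two marginals. -/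
open MeasureTheory ProbabilityTheory Real
open scoped NNReal ENNReal

namespace NoiseReductionAux

lemma gaussianPDFReal_mul (a : ℝ) (v w : ℝ≥0) (hv : v ≠ 0) (hw : w ≠ 0) (x y : ℝ) :
    gaussianPDFReal a v x * gaussianPDFReal x w y
      = gaussianPDFReal a (v + w) y
        * gaussianPDFReal ((w * a + v * y) / (v + w)) (v * w / (v + w)) x := by
  have hV : (0:ℝ) < v := lt_of_le_of_ne v.coe_nonneg (by exact_mod_cast (Ne.symm hv))
  have hW : (0:ℝ) < w := lt_of_le_of_ne w.coe_nonneg (by exact_mod_cast (Ne.symm hw))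
  have hVW : (0:ℝ) < (v:ℝ) + w := by linarith
  simp only [gaussianPDFReal]
  rw [mul_mul_mul_comm, ← mul_inv, ← Real.exp_add, mul_mul_mul_comm, ← mul_inv, ← Real.exp_add]
  have h1 : √(2 * π * v) * √(2 * π * w)
      = √(2 * π * ((v:ℝ≥0) + w)) * √(2 * π * ((v * w / (v + w) : ℝ≥0))) := by
    rw [← Real.sqrt_mul (by positivity), ← Real.sqrt_mul (by positivity)]
    congr 1
    push_cast
    field_simp
  have h2 : -(x - a) ^ 2 / (2 * v) + -(y - x) ^ 2 / (2 * w)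
      = -(y - a) ^ 2 / (2 * ((v:ℝ≥0) + w))
        + -(x - (w * a + v * y) / (v + w)) ^ 2 / (2 * ((v * w / (v + w) : ℝ≥0))) := by
    push_cast
    field_simp
    ring
  rw [h1, h2]
  norm_cast

lemma measurable_gaussianPDF_pair (w : ℝ≥0) :
    Measurable (fun p : ℝ × ℝ => gaussianPDF p.1 w p.2) := by
  simp only [gaussianPDF_def, gaussianPDFReal]
  fun_prop

/-- Convolution of two real Gaussian measures. -/
lemma gaussianReal_conv (a : ℝ) (v w : ℝ≥0) (hv : v ≠ 0) (hw : w ≠ 0) :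
    ((gaussianReal a v).prod (gaussianReal 0 w)).map (fun p : ℝ × ℝ => p.1 + p.2)
      = gaussianReal a (v + w) := by
  have hvw : v + w ≠ 0 := by positivity
  have hvw' : v * w / (v + w) ≠ 0 := by positivity
  ext s hs
  rw [Measure.map_apply (by fun_prop) hs,
    Measure.prod_apply ((by fun_prop : Measurable fun p : ℝ × ℝ => p.1 + p.2) hs)]
  have hx : ∀ x : ℝ, gaussianReal 0 w (Prod.mk x ⁻¹' ((fun p : ℝ × ℝ => p.1 + p.2) ⁻¹' s))
      = ∫⁻ y in s, gaussianPDF x w y := by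
    intro x
    have : Prod.mk x ⁻¹' ((fun p : ℝ × ℝ => p.1 + p.2) ⁻¹' s) = (fun y => x + y) ⁻¹' s := rfl
    rw [this, ← Measure.map_apply (measurable_const_add x) hs, gaussianReal_map_const_add,
      zero_add, gaussianReal_apply _ hw]
  simp_rw [hx]
  have hinner : Measurable fun x => ∫⁻ y in s, gaussianPDF x w y :=
    Measurable.lintegral_prod_right' (measurable_gaussianPDF_pair w)
  rw [gaussianReal_of_var_ne_zero _ hv,
    lintegral_withDensity_eq_lintegral_mul _ (measurable_gaussianPDF a v) hinner]
  simp only [Pi.mul_apply]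
  have hswap : ∫⁻ x, gaussianPDF a v x * ∫⁻ y in s, gaussianPDF x w y
      = ∫⁻ y in s, ∫⁻ x, gaussianPDF a v x * gaussianPDF x w y := by
    rw [← lintegral_lintegral_swap]
    · congr 1 with x
      rw [lintegral_const_mul (gaussianPDF a v x) (measurable_gaussianPDF x w)]
    · exact ((measurable_gaussianPDF a v).comp measurable_fst).mul
        ((measurable_gaussianPDF_pair w).comp (measurable_fst.prodMk measurable_snd))
        |>.aemeasurable
  rw [hswap]
  have hpoint : ∀ y : ℝ, ∫⁻ x, gaussianPDF a v x * gaussianPDF x w y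
      = gaussianPDF a (v + w) y := by
    intro y
    simp only [gaussianPDF_def]
    calc ∫⁻ x, ENNReal.ofReal (gaussianPDFReal a v x) * ENNReal.ofReal (gaussianPDFReal x w y)
        = ∫⁻ x, ENNReal.ofReal (gaussianPDFReal a (v + w) y)
            * ENNReal.ofReal (gaussianPDFReal ((w * a + v * y) / (v + w)) (v * w / (v + w)) x) := by
          congr 1 with x
          rw [← ENNReal.ofReal_mul (gaussianPDFReal_nonneg _ _ _),
            ← ENNReal.ofReal_mul (gaussianPDFReal_nonneg _ _ _),
            gaussianPDFReal_mul a v w hv hw x y]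
      _ = ENNReal.ofReal (gaussianPDFReal a (v + w) y) := by
          rw [lintegral_const_mul _ (measurable_gaussianPDFReal _ _).ennreal_ofReal,
            lintegral_gaussianPDFReal_eq_one _ hvw', mul_one]
  simp_rw [hpoint]
  rw [← gaussianReal_apply a hvw s]

end NoiseReductionAux

open NoiseReductionAux

lemma klDiv_map_measurableEquiv {α β : Type*} [MeasurableSpace α] [MeasurableSpace β] (e : α ≃ᵐ β)
    (μ ν : Measure α) [SigmaFinite μ] [SigmaFinite ν] (hμν : μ ≪ ν) :
    klDiv (μ.map e) (ν.map e) = klDiv μ ν := by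
  unfold klDiv
  rw [integral_map e.measurable.aemeasurable
    (Measure.measurable_rnDeriv _ _).ennreal_toReal.log.aestronglyMeasurable]
  refine integral_congr_ae ?_
  filter_upwards [hμν.ae_le (e.measurableEmbedding.rnDeriv_map μ ν)] with x hx
  rw [hx]

/-- Reduction step in the proof of Theorem 3.1:
`I(Y; √η (Y + U) + W) = I(Y; Y + V)` where `V ~ N(0, σ_U² + η⁻¹)` is independent of `Y`,
with mutual information expressed as the KL divergence of the joint law from the product
of its marginals. -/
theorem mutualInfo_noise_reduction
    (μY σY2 σU2 η : ℝ) (hσY : 0 < σY2) (hσU : 0 < σU2) (hη : 0 < η)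
    (μ₁ : Measure (ℝ × ℝ))
    (hμ₁ : μ₁ = ((gaussianReal μY σY2.toNNReal).prod
        ((gaussianReal 0 σU2.toNNReal).prod (gaussianReal 0 1))).map
      (fun p : ℝ × ℝ × ℝ => (p.1, Real.sqrt η * (p.1 + p.2.1) + p.2.2)))
    (μ₂ : Measure (ℝ × ℝ))
    (hμ₂ : μ₂ = ((gaussianReal μY σY2.toNNReal).prod
        (gaussianReal 0 (σU2 + η⁻¹).toNNReal)).map
      (fun p : ℝ × ℝ => (p.1, p.1 + p.2))) :
    klDiv μ₁ ((μ₁.map Prod.fst).prod (μ₁.map Prod.snd))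
      = klDiv μ₂ ((μ₂.map Prod.fst).prod (μ₂.map Prod.snd)) := by
  have hc : (0:ℝ) < Real.sqrt η := Real.sqrt_pos.mpr hη
  set c : ℝ := Real.sqrt η with hcdef
  set vY := σY2.toNNReal with hvYdef
  set vU := σU2.toNNReal with hvUdef
  set vE := (η⁻¹).toNNReal with hvEdef
  set vV := (σU2 + η⁻¹).toNNReal with hvVdef
  have hvY : vY ≠ 0 := (Real.toNNReal_pos.mpr hσY).ne'
  have hvU : vU ≠ 0 := (Real.toNNReal_pos.mpr hσU).ne'
  have hvE : vE ≠ 0 := (Real.toNNReal_pos.mpr (by positivity)).ne'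
  have hvV : vV ≠ 0 := (Real.toNNReal_pos.mpr (by positivity)).ne'
  have hsum : vV = vU + vE := by
    rw [hvVdef, hvUdef, hvEdef, Real.toNNReal_add hσU.le (by positivity)]
  -- measurable equiv (y, t) ↦ (y, c * t)
  let e : (ℝ × ℝ) ≃ᵐ (ℝ × ℝ) :=
    (MeasurableEquiv.refl ℝ).prodCongr (Homeomorph.mulLeft₀ c hc.ne').toMeasurableEquiv
  have he : ⇑e = fun p : ℝ × ℝ => (p.1, c * p.2) := rfl
  -- the shear map
  have hSmeas : Measurable (fun p : ℝ × ℝ => (p.1, p.1 + p.2)) := by fun_prop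
  -- law of scaled third noise
  have hgW : (gaussianReal 0 (1:ℝ≥0)).map (fun x => c⁻¹ * x) = gaussianReal 0 vE := by
    rw [show (fun x : ℝ => c⁻¹ * x) = (c⁻¹ * ·) from rfl, gaussianReal_map_const_mul]
    congr 1
    · simp
    · ext
      push_cast
      rw [mul_one, inv_pow, Real.sq_sqrt hη.le, Real.coe_toNNReal _ (by positivity)]
  -- convolution of second and scaled third noises
  have hconvUE : (((gaussianReal 0 vU).prod (gaussianReal 0 vE)).map
      (fun p : ℝ × ℝ => p.1 + p.2)) = gaussianReal 0 vV := by
    rw [hsum]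
    exact gaussianReal_conv 0 vU vE hvU hvE
  -- μ₁ is the image of μ₂ under e
  have hmap : μ₁ = μ₂.map e := by
    have hfun : (fun p : ℝ × ℝ × ℝ => (p.1, c * (p.1 + p.2.1) + p.2.2))
        = (fun p : ℝ × ℝ => (p.1, c * p.2)) ∘ ((fun p : ℝ × ℝ => (p.1, p.1 + p.2))
            ∘ (Prod.map id (fun q : ℝ × ℝ => q.1 + c⁻¹ * q.2))) := by
      funext p
      simp only [Function.comp_apply, Prod.map_apply, Prod.map_fst, Prod.map_snd, id_eq]
      congr 1
      field_simp
      ring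
    have hg₂ : ((gaussianReal 0 vU).prod (gaussianReal 0 (1:ℝ≥0))).map
        (fun q : ℝ × ℝ => q.1 + c⁻¹ * q.2) = gaussianReal 0 vV := by
      have : (fun q : ℝ × ℝ => q.1 + c⁻¹ * q.2)
          = (fun p : ℝ × ℝ => p.1 + p.2) ∘ (Prod.map id (fun x : ℝ => c⁻¹ * x)) := rfl
      rw [this, ← Measure.map_map (by fun_prop) (by fun_prop),
        ← Measure.map_prod_map _ _ measurable_id (by fun_prop), Measure.map_id, hgW, hconvUE]
    rw [hμ₁, hμ₂, he, hfun, ← Measure.map_map (by fun_prop) (by fun_prop),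
      ← Measure.map_map hSmeas (by fun_prop),
      ← Measure.map_prod_map _ _ measurable_id (by fun_prop), Measure.map_id, hg₂]
  -- probability measure instances
  have hμ₂prob : IsProbabilityMeasure μ₂ := by
    rw [hμ₂]; exact Measure.isProbabilityMeasure_map hSmeas.aemeasurable
  -- marginals of μ₂
  have hfst : μ₂.map Prod.fst = gaussianReal μY vY := by
    rw [hμ₂, Measure.map_map measurable_fst hSmeas]
    have : (Prod.fst ∘ fun p : ℝ × ℝ => (p.1, p.1 + p.2)) = Prod.fst := rfl
    rw [this, Measure.map_fst_prod, measure_univ, one_smul]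
  have hsnd : μ₂.map Prod.snd = gaussianReal μY (vY + vV) := by
    rw [hμ₂, Measure.map_map measurable_snd hSmeas]
    have : (Prod.snd ∘ fun p : ℝ × ℝ => (p.1, p.1 + p.2)) = fun p : ℝ × ℝ => p.1 + p.2 := rfl
    rw [this]
    exact gaussianReal_conv μY vY vV hvY hvV
  -- the product of marginals transforms under e as well
  have hmarg : (μ₁.map Prod.fst).prod (μ₁.map Prod.snd)
      = ((μ₂.map Prod.fst).prod (μ₂.map Prod.snd)).map e := by
    have h1 : μ₁.map Prod.fst = μ₂.map Prod.fst := by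
      rw [hmap, Measure.map_map measurable_fst e.measurable, he]
      rfl
    have h2 : μ₁.map Prod.snd = (μ₂.map Prod.snd).map (fun x => c * x) := by
      rw [hmap, Measure.map_map measurable_snd e.measurable, he,
        Measure.map_map (by fun_prop : Measurable fun x : ℝ => c * x) measurable_snd]
      rfl
    rw [h1, h2, he,
      show (fun p : ℝ × ℝ => (p.1, c * p.2)) = Prod.map id (fun x : ℝ => c * x) from rfl,
      ← Measure.map_prod_map _ _ measurable_id (by fun_prop), Measure.map_id]
  -- absolute continuity of μ₂ w.r.t. the product of its marginals
  have hac : μ₂ ≪ (μ₂.map Prod.fst).prod (μ₂.map Prod.snd) := by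
    have h1 : μ₂ ≪ (volume : Measure ℝ).prod volume := by
      rw [hμ₂]
      have hprod : (gaussianReal μY vY).prod (gaussianReal 0 vV)
          ≪ (volume : Measure ℝ).prod volume :=
        (gaussianReal_absolutelyContinuous _ hvY).prod (gaussianReal_absolutelyContinuous _ hvV)
      have := hprod.map hSmeas
      rwa [(measurePreserving_prod_add volume volume).map_eq] at this
    have h2 : (volume : Measure ℝ).prod volume ≪ (μ₂.map Prod.fst).prod (μ₂.map Prod.snd) := by
      rw [hfst, hsnd]
      exact (gaussianReal_absolutelyContinuous' _ hvY).prod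
        (gaussianReal_absolutelyContinuous' _ (by positivity))
    exact h1.trans h2
  have : IsProbabilityMeasure ((μ₂.map Prod.fst).prod (μ₂.map Prod.snd)) := by
    rw [hfst, hsnd]; infer_instance
  rw [hmarg, hmap]
  exact klDiv_map_measurableEquiv e μ₂ _ hac
end

section
/- Let σ_Y², σ_U² > 0, set I_max = (1/2)·log₂((σ_Y² + σ_U²)/σ_U²), η̄ = 1/σ_U², and f(η) = (1/2)·log₂( (η·(σ_Y² + σ_U²) + 1) / (1 + σ_U²·η) ). Then for every η ≥ 0, f(η) − f(η̄) < 1/2; equivalently, I_max − f(η̄) = (1/2)·log₂( 2·(σ_Y² + σ_U²) / (σ_Y² + 2·σ_U²) ) < 1/2. -/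
/-- The noise-robustness scale `η̄ = 1/σ_U²` is the signal-to-noise ratio at which at most
half a bit of information can be gained by increasing measurement sensitivity:
for the scalar Gaussian-channel mutual information `f`, `f(η) − f(η̄) < 1/2` for all
`η ≥ 0`; equivalently, `I_max − f(η̄) = (1/2) log₂(2(σ_Y² + σ_U²)/(σ_Y² + 2σ_U²)) < 1/2`. -/
theorem noise_robustness_scale_half_bit
    (σY2 σU2 : ℝ) (hY : 0 < σY2) (hU : 0 < σU2)
    (Imax ηbar : ℝ)
    (hImax : Imax = (1 / 2) * Real.logb 2 ((σY2 + σU2) / σU2))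
    (hηbar : ηbar = 1 / σU2)
    (f : ℝ → ℝ)
    (hf : f = fun η : ℝ =>
      (1 / 2) * Real.logb 2 ((η * (σY2 + σU2) + 1) / (1 + σU2 * η))) :
    (∀ η : ℝ, 0 ≤ η → f η - f ηbar < 1 / 2) ∧
      Imax - f ηbar = (1 / 2) * Real.logb 2 (2 * (σY2 + σU2) / (σY2 + 2 * σU2)) ∧
      (1 / 2) * Real.logb 2 (2 * (σY2 + σU2) / (σY2 + 2 * σU2)) < 1 / 2 := by
  have hb : (1 : ℝ) < 2 := one_lt_two
  have hA : 0 < σY2 + σU2 := by linarith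
  -- f η < Imax for η ≥ 0
  have hlt : ∀ η : ℝ, 0 ≤ η → f η < Imax := by
    intro η hη
    rw [hf, hImax]
    have hden : 0 < 1 + σU2 * η := by positivity
    have hnum : 0 < η * (σY2 + σU2) + 1 := by positivity
    have harg : (η * (σY2 + σU2) + 1) / (1 + σU2 * η) < (σY2 + σU2) / σU2 := by
      rw [div_lt_div_iff₀ hden hU]
      nlinarith
    have := Real.logb_lt_logb hb (by positivity) harg
    simpa using by linarith
  -- key equality
  have heq : Imax - f ηbar
      = (1 / 2) * Real.logb 2 (2 * (σY2 + σU2) / (σY2 + 2 * σU2)) := by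
    rw [hf, hImax, hηbar]
    simp only
    have h1 : (0:ℝ) < (σY2 + σU2) / σU2 := by positivity
    have hden : (0:ℝ) < 1 + σU2 * (1 / σU2) := by positivity
    have hnum : (0:ℝ) < 1 / σU2 * (σY2 + σU2) + 1 := by positivity
    have h2 : (0:ℝ) < (1 / σU2 * (σY2 + σU2) + 1) / (1 + σU2 * (1 / σU2)) := by positivity
    rw [← mul_sub, ← Real.logb_div (ne_of_gt h1) (ne_of_gt h2)]
    congr 2
    have hU' : σU2 ≠ 0 := ne_of_gt hU
    have hD : σY2 + 2 * σU2 ≠ 0 := by positivity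
    field_simp
    ring
  refine ⟨fun η hη => ?_, heq, ?_⟩
  · have h1 := hlt η hη
    have h2 : Imax - f ηbar < 1 / 2 := by
      rw [heq]
      have harg : 2 * (σY2 + σU2) / (σY2 + 2 * σU2) < 2 := by
        rw [div_lt_iff₀ (by positivity)]
        linarith
      have hpos : (0:ℝ) < 2 * (σY2 + σU2) / (σY2 + 2 * σU2) := by positivity
      have := Real.logb_lt_logb hb hpos harg
      simp only [Real.logb_self_eq_one (by norm_num : (1:ℝ) < 2)] at this
      linarith
    linarith
  · rw [← heq]
    have h2 : Imax - f ηbar < 1 / 2 := by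
      rw [heq]
      have harg : 2 * (σY2 + σU2) / (σY2 + 2 * σU2) < 2 := by
        rw [div_lt_iff₀ (by positivity)]
        linarith
      have hpos : (0:ℝ) < 2 * (σY2 + σU2) / (σY2 + 2 * σU2) := by positivity
      have := Real.logb_lt_logb hb hpos harg
      simp only [Real.logb_self_eq_one (by norm_num : (1:ℝ) < 2)] at this
      linarith
    exact heq ▸ h2
end

section
/- Let n be a positive integer, let Σ_Y be a positive semidefinite real n×n matrix, and let Σ_U be a positive definite real n×n matrix. Then the function η ↦ det(Σ_Y + Σ_U + η⁻¹·Iₙ) / det(Σ_U + η⁻¹·Iₙ) is monotone nondecreasing on (0, ∞), and its value is at least 1 for every η > 0. -/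
open Matrix
open scoped MatrixOrder

section Aux

variable {m : Type*} [Fintype m] [DecidableEq m]

/-- For a positive semidefinite real matrix `Q`, `1 ≤ det (1 + Q)`. -/
lemma aux_one_le_det_one_add {Q : Matrix m m ℝ} (hQ : Q.PosSemidef) :
    1 ≤ (1 + Q).det := by
  set U := (hQ.1.eigenvectorUnitary : Matrix m m ℝ) with hUdef
  have hU1 : U * star U = 1 := Matrix.mem_unitaryGroup_iff.mp hQ.1.eigenvectorUnitary.2
  have key : 1 + Q = U * (1 + diagonal (RCLike.ofReal ∘ hQ.1.eigenvalues)) * star U := by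
    have hs : Q = U * diagonal (RCLike.ofReal ∘ hQ.1.eigenvalues) * star U := by
      have := hQ.1.spectral_theorem
      rwa [Unitary.conjStarAlgAut_apply] at this
    rw [mul_add, add_mul, mul_one, hU1, ← hs]
  rw [key, det_mul_right_comm, hU1, one_mul]
  rw [show (1 : Matrix m m ℝ) = diagonal (fun _ => 1) from (diagonal_one).symm,
    diagonal_add, det_diagonal]
  simp only [Pi.add_apply, Function.comp_apply, RCLike.ofReal_real_eq_id, id_eq]
  have key2 : (∏ _i : m, (1:ℝ)) ≤ ∏ i : m, (1 + hQ.1.eigenvalues i) :=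
    Finset.prod_le_prod (fun i _ => zero_le_one)
      (fun i _ => by have := hQ.eigenvalues_nonneg i; linarith)
  simpa using key2

/-- For `A` positive definite and `P` positive semidefinite, `det A ≤ det (A + P)`. -/
lemma aux_det_le_det_add {A P : Matrix m m ℝ} (hA : A.PosDef) (hP : P.PosSemidef) :
    A.det ≤ (A + P).det := by
  set S := CFC.sqrt A with hSdef
  have hSS : S * S = A := CFC.sqrt_mul_sqrt_self A hA.posSemidef.nonneg
  have hdetS : S.det * S.det = A.det := by rw [← det_mul, hSS]
  have hSd : S.det ≠ 0 := by
    intro h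
    rw [h, mul_zero] at hdetS
    exact hA.det_pos.ne' hdetS.symm
  have hSunit : IsUnit S.det := hSd.isUnit
  have hSH : Sᴴ = S := (CFC.sqrt_nonneg A).posSemidef.1
  have hSiH : (S⁻¹)ᴴ = S⁻¹ := by rw [conjTranspose_nonsing_inv, hSH]
  have hQ : (S⁻¹ * P * (S⁻¹)ᴴ).PosSemidef := hP.mul_mul_conjTranspose_same _
  have key : A + P = S * (1 + S⁻¹ * P * (S⁻¹)ᴴ) * S := by
    rw [mul_add, add_mul, mul_one, hSS, hSiH]
    congr 1
    rw [show S * (S⁻¹ * P * S⁻¹) * S = (S * S⁻¹) * P * (S⁻¹ * S) by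
      simp only [Matrix.mul_assoc],
      Matrix.mul_nonsing_inv _ hSunit, Matrix.nonsing_inv_mul _ hSunit, one_mul, mul_one]
  have hdet : (A + P).det = A.det * (1 + S⁻¹ * P * (S⁻¹)ᴴ).det := by
    rw [key, det_mul, det_mul, mul_right_comm, hdetS]
  have h1 := aux_one_le_det_one_add hQ
  nlinarith [hA.det_pos]

end Aux

/-- The determinant ratio underlying the vector Gaussian-channel mutual information,
`η ↦ det(Σ_Y + Σ_U + η⁻¹ Iₙ)/det(Σ_U + η⁻¹ Iₙ)`, is monotone nondecreasing on `(0, ∞)`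
and is at least `1` for every `η > 0`, for `Σ_Y` positive semidefinite and `Σ_U`
positive definite. -/
theorem vector_mutualInfo_det_ratio_monotone_ge_one
    (n : ℕ) (hn : 0 < n)
    (SY SU : Matrix (Fin n) (Fin n) ℝ)
    (hY : SY.PosSemidef) (hU : SU.PosDef) :
    MonotoneOn
      (fun η : ℝ =>
        (SY + SU + η⁻¹ • (1 : Matrix (Fin n) (Fin n) ℝ)).det
          / (SU + η⁻¹ • (1 : Matrix (Fin n) (Fin n) ℝ)).det)
      (Set.Ioi 0) ∧
    ∀ η : ℝ, 0 < η →
      1 ≤ (SY + SU + η⁻¹ • (1 : Matrix (Fin n) (Fin n) ℝ)).det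
            / (SU + η⁻¹ • (1 : Matrix (Fin n) (Fin n) ℝ)).det := by
  set R := CFC.sqrt SY with hRdef
  have hRR : R * R = SY := CFC.sqrt_mul_sqrt_self SY hY.nonneg
  have hRH : Rᴴ = R := (CFC.sqrt_nonneg SY).posSemidef.1
  -- positive definiteness of `SU + t • 1` for `t > 0`
  have hBpd : ∀ t : ℝ, 0 < t → (SU + t • (1 : Matrix (Fin n) (Fin n) ℝ)).PosDef := by
    intro t ht
    refine hU.add_posSemidef ?_
    rw [smul_one_eq_diagonal]
    exact posSemidef_diagonal_iff.mpr fun i => ht.le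
  -- the ratio equals `det (1 + R * B⁻¹ * R)`
  have hratio : ∀ t : ℝ, 0 < t →
      (SY + SU + t • (1 : Matrix (Fin n) (Fin n) ℝ)).det
        / (SU + t • (1 : Matrix (Fin n) (Fin n) ℝ)).det
      = (1 + R * (SU + t • (1 : Matrix (Fin n) (Fin n) ℝ))⁻¹ * R).det := by
    intro t ht
    set B := SU + t • (1 : Matrix (Fin n) (Fin n) ℝ) with hBdef
    have hB := hBpd t ht
    have hBu : IsUnit B.det := hB.det_pos.ne'.isUnit
    have hnum : SY + SU + t • (1 : Matrix (Fin n) (Fin n) ℝ) = B * (1 + B⁻¹ * SY) := by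
      rw [mul_add, mul_one, ← Matrix.mul_assoc, Matrix.mul_nonsing_inv _ hBu, one_mul,
        hBdef]
      abel
    rw [hnum, det_mul, mul_comm, mul_div_assoc, div_self hB.det_pos.ne', mul_one]
    rw [← hRR, show B⁻¹ * (R * R) = (B⁻¹ * R) * R from (Matrix.mul_assoc _ _ _).symm,
      det_one_add_mul_comm, Matrix.mul_assoc]
  -- `R * B⁻¹ * R` is PSD
  have hMpsd : ∀ t : ℝ, 0 < t →
      (R * (SU + t • (1 : Matrix (Fin n) (Fin n) ℝ))⁻¹ * R).PosSemidef := by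
    intro t ht
    have := ((hBpd t ht).inv.posSemidef).mul_mul_conjTranspose_same R
    rwa [hRH] at this
  -- difference of inverses is PSD, via diagonalization of SU
  have hinvdiff : ∀ t s : ℝ, 0 < t → t ≤ s →
      ((SU + t • (1 : Matrix (Fin n) (Fin n) ℝ))⁻¹
        - (SU + s • (1 : Matrix (Fin n) (Fin n) ℝ))⁻¹).PosSemidef := by
    intro t s ht hts
    have hs : 0 < s := lt_of_lt_of_le ht hts
    set V := (hU.1.eigenvectorUnitary : Matrix (Fin n) (Fin n) ℝ) with hVdef
    have hV1 : V * star V = 1 := Matrix.mem_unitaryGroup_iff.mp hU.1.eigenvectorUnitary.2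
    have hV1' : star V * V = 1 := Matrix.mem_unitaryGroup_iff'.mp hU.1.eigenvectorUnitary.2
    set d : Fin n → ℝ := hU.1.eigenvalues with hddef
    have hdpos : ∀ i, 0 < d i := hU.eigenvalues_pos
    have hspec : SU = V * diagonal d * star V := by
      have := hU.1.spectral_theorem
      rwa [Unitary.conjStarAlgAut_apply, RCLike.ofReal_real_eq_id,
        Function.id_comp] at this
    have hBdiag : ∀ u : ℝ, SU + u • (1 : Matrix (Fin n) (Fin n) ℝ)
        = V * diagonal (fun i => d i + u) * star V := by
      intro u
      have h1 : u • (1 : Matrix (Fin n) (Fin n) ℝ) = V * diagonal (fun _ => u) * star V := by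
        rw [show diagonal (fun _ : Fin n => u) = u • (1 : Matrix (Fin n) (Fin n) ℝ) from
          (smul_one_eq_diagonal u).symm]
        rw [Matrix.mul_smul, mul_one, Matrix.smul_mul, hV1]
      rw [hspec, h1, ← add_mul, ← mul_add, ← diagonal_add]
    have hBinv : ∀ u : ℝ, 0 < u → (SU + u • (1 : Matrix (Fin n) (Fin n) ℝ))⁻¹
        = V * diagonal (fun i => (d i + u)⁻¹) * star V := by
      intro u hu
      refine Matrix.inv_eq_right_inv ?_
      rw [hBdiag u]
      calc V * diagonal (fun i => d i + u) * star V * (V * diagonal (fun i => (d i + u)⁻¹) * star V)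
          = V * diagonal (fun i => d i + u) * (star V * V) * diagonal (fun i => (d i + u)⁻¹)
            * star V := by simp only [Matrix.mul_assoc]
        _ = V * (diagonal (fun i => d i + u) * diagonal (fun i => (d i + u)⁻¹)) * star V := by
            rw [hV1', mul_one]; simp only [Matrix.mul_assoc]
        _ = 1 := by
            rw [diagonal_mul_diagonal]
            have : (fun i => (d i + u) * (d i + u)⁻¹) = fun _ : Fin n => (1 : ℝ) := by
              funext i
              exact mul_inv_cancel₀ (by have := hdpos i; linarith)
            rw [this, diagonal_one, mul_one, hV1]
    rw [hBinv t ht, hBinv s hs, ← Matrix.sub_mul, ← Matrix.mul_sub, diagonal_sub]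
    have hpsd : (diagonal (fun i => (d i + t)⁻¹ - (d i + s)⁻¹) :
        Matrix (Fin n) (Fin n) ℝ).PosSemidef := by
      refine posSemidef_diagonal_iff.mpr fun i => ?_
      have h1 : 0 < d i + t := by have := hdpos i; linarith
      have h2 : (d i + s)⁻¹ ≤ (d i + t)⁻¹ :=
        one_div (d i + s) ▸ one_div (d i + t) ▸
          one_div_le_one_div_of_le h1 (by linarith)
      linarith
    have := hpsd.mul_mul_conjTranspose_same V
    rwa [← Matrix.star_eq_conjTranspose] at this
  constructor
  · intro η₁ hη₁ η₂ hη₂ hle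
    simp only [Set.mem_Ioi] at hη₁ hη₂
    have ht2 : (0 : ℝ) < η₂⁻¹ := inv_pos.mpr hη₂
    have hts : η₂⁻¹ ≤ η₁⁻¹ := inv_anti₀ hη₁ hle
    simp only
    rw [hratio η₁⁻¹ (inv_pos.mpr hη₁), hratio η₂⁻¹ ht2]
    set M₁ := R * (SU + η₁⁻¹ • (1 : Matrix (Fin n) (Fin n) ℝ))⁻¹ * R with hM1
    set M₂ := R * (SU + η₂⁻¹ • (1 : Matrix (Fin n) (Fin n) ℝ))⁻¹ * R with hM2
    have hDpsd : (M₂ - M₁).PosSemidef := by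
      have := (hinvdiff η₂⁻¹ η₁⁻¹ ht2 hts).mul_mul_conjTranspose_same R
      rwa [hRH, Matrix.mul_sub, Matrix.sub_mul] at this
    have hApd : (1 + M₁).PosDef :=
      Matrix.PosDef.one.add_posSemidef (hMpsd η₁⁻¹ (inv_pos.mpr hη₁))
    have key := aux_det_le_det_add hApd hDpsd
    rwa [show (1 + M₁) + (M₂ - M₁) = 1 + M₂ by abel] at key
  · intro η hη
    rw [hratio η⁻¹ (inv_pos.mpr hη)]
    exact aux_one_le_det_one_add (hMpsd η⁻¹ (inv_pos.mpr hη))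
end
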